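/- arXiv:0710.3514 — 2 statements merged into one kernel-verified Lean document; each statement's English description precedes it below -/
import Mathlib

section
/- Let T be a full rank lattice in ℝ^n, B ∈ GL(n,ℝ) with BT ⊆ T, and q = |det B| (an integer). Let v₀,...,v_{q-1} ∈ T be representatives of T/BT. Let K be a measurable T-tile with B⁻¹K ⊆ K, and set K_i = (B⁻¹K + B⁻¹v_i + T) ∩ K. Then K = ⋃_{i=0}^{q-1} K_i up to measure zero, |K_i ∩ K_j| = 0 for i ≠ j, and each BK_i is T-translation congruent to K. -/
open MeasureTheory Set

variable {n : ℕ}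

/-- `T` is a full rank lattice in `ℝⁿ`: the integer span of a vector space basis. -/
def IsFullRankLattice (T : Set (Fin n → ℝ)) : Prop :=
  ∃ g : Fin n → (Fin n → ℝ), LinearIndependent ℝ g ∧
    Submodule.span ℝ (Set.range g) = ⊤ ∧
    T = {x | ∃ m : Fin n → ℤ, x = ∑ i, (m i : ℝ) • g i}

/-- `K` is a `T`-tile: the translates `K + t`, `t ∈ T`, tile `ℝⁿ` up to measure zero. -/
def IsTransTile (T : Set (Fin n → ℝ)) (K : Set (Fin n → ℝ)) : Prop :=
  (∀ t₁ t₂ : T, t₁ ≠ t₂ →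
    volume (((· + (t₁ : Fin n → ℝ)) '' K) ∩ ((· + (t₂ : Fin n → ℝ)) '' K)) = 0) ∧
  volume (univ \ ⋃ t : T, (· + (t : Fin n → ℝ)) '' K) = 0

/-- `E` and `F` are `T`-translation congruent: `E` can be partitioned (up to null sets)
into pieces `E_t`, `t ∈ T`, whose translates `E_t + t` partition `F` up to null sets. -/
def TransCongr (T : Set (Fin n → ℝ)) (E F : Set (Fin n → ℝ)) : Prop :=
  ∃ P : T → Set (Fin n → ℝ),
    (∀ t, P t ⊆ E) ∧
    (∀ t₁ t₂ : T, t₁ ≠ t₂ → volume (P t₁ ∩ P t₂) = 0) ∧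
    volume (E \ ⋃ t : T, P t) = 0 ∧
    (∀ t₁ t₂ : T, t₁ ≠ t₂ →
      volume (((· + (t₁ : Fin n → ℝ)) '' P t₁) ∩ ((· + (t₂ : Fin n → ℝ)) '' P t₂)) = 0) ∧
    volume (F \ ⋃ t : T, (· + (t : Fin n → ℝ)) '' P t) = 0 ∧
    volume ((⋃ t : T, (· + (t : Fin n → ℝ)) '' P t) \ F) = 0

private lemma mulVec_image_null' {n : ℕ} (B : Matrix (Fin n) (Fin n) ℝ)
    {s : Set (Fin n → ℝ)} (hs : volume s = 0) : volume (B.mulVec '' s) = 0 := by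
  have h : B.mulVec '' s = (Matrix.toLin' B) '' s := by
    ext x; simp [Matrix.toLin'_apply]
  rw [h, Measure.addHaar_image_linearMap, hs, mul_zero]

private lemma mulVec_preimage_null' {n : ℕ} (B : Matrix (Fin n) (Fin n) ℝ) (hB : B.det ≠ 0)
    {s : Set (Fin n → ℝ)} (hs : volume s = 0) : volume (B.mulVec ⁻¹' s) = 0 := by
  have h : B.mulVec ⁻¹' s = (Matrix.toLin' B) ⁻¹' s := by
    ext x; simp [Matrix.toLin'_apply]
  rw [h, Measure.addHaar_preimage_linearMap (volume)
    (by rwa [LinearMap.det_toLin']), hs, mul_zero]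

private lemma add_image_null' {n : ℕ} (t : Fin n → ℝ) {s : Set (Fin n → ℝ)}
    (hs : volume s = 0) : volume ((· + t) '' s) = 0 := by
  rw [image_add_right, measure_preimage_add_right, hs]

/-- With `T` a full rank lattice, `B` with `BT ⊆ T`, `q = |det B|`,
`v₀,…,v_{q-1}` coset representatives of `T/BT`, `K` a measurable `T`-tile with
`B⁻¹K ⊆ K`, and `K_i = (B⁻¹K + B⁻¹v_i + T) ∩ K`, we have `K = ⋃ K_i` up to measure zero,
`|K_i ∩ K_j| = 0` for `i ≠ j`, and each `B K_i` is `T`-translation congruent to `K`. -/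
theorem tile_decomposition_lemma
    (T : Set (Fin n → ℝ)) (hT : IsFullRankLattice T)
    (B : Matrix (Fin n) (Fin n) ℝ) (hB : IsUnit B.det)
    (hBT : ∀ t ∈ T, B.mulVec t ∈ T)
    (q : ℕ) (hq : (q : ℝ) = |B.det|)
    (v : Fin q → (Fin n → ℝ)) (hv : ∀ i, v i ∈ T)
    (hrep : ∀ t ∈ T, ∃! i : Fin q, ∃ s ∈ T, t = v i + B.mulVec s)
    (K : Set (Fin n → ℝ)) (hK : MeasurableSet K) (htile : IsTransTile T K)
    (hBK : B⁻¹.mulVec '' K ⊆ K)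
    (Ki : Fin q → Set (Fin n → ℝ))
    (hKi : ∀ i, Ki i =
      {x ∈ K | ∃ k ∈ K, ∃ t ∈ T, x = B⁻¹.mulVec k + B⁻¹.mulVec (v i) + t}) :
    volume (K \ ⋃ i, Ki i) = 0 ∧
    (∀ i j : Fin q, i ≠ j → volume (Ki i ∩ Ki j) = 0) ∧
    (∀ i : Fin q, TransCongr T (B.mulVec '' Ki i) K) := by
  classical
  have hdet : B.det ≠ 0 := hB.ne_zero
  have hdet' : (B⁻¹).det ≠ 0 := (Matrix.isUnit_nonsing_inv_det B hB).ne_zero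
  have hBBinv : ∀ x : Fin n → ℝ, B.mulVec (B⁻¹.mulVec x) = x := fun x => by
    rw [Matrix.mulVec_mulVec, Matrix.mul_nonsing_inv B hB, Matrix.one_mulVec]
  have hBinvB : ∀ x : Fin n → ℝ, B⁻¹.mulVec (B.mulVec x) = x := fun x => by
    rw [Matrix.mulVec_mulVec, Matrix.nonsing_inv_mul B hB, Matrix.one_mulVec]
  -- lattice structure facts
  obtain ⟨g, -, -, hTeq⟩ := hT
  have hT0 : (0 : Fin n → ℝ) ∈ T := by
    rw [hTeq]; exact ⟨0, by simp⟩
  have hTadd : ∀ a ∈ T, ∀ b ∈ T, a + b ∈ T := by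
    rw [hTeq]; rintro a ⟨ma, rfl⟩ b ⟨mb, rfl⟩
    exact ⟨ma + mb, by
      rw [← Finset.sum_add_distrib]
      refine Finset.sum_congr rfl fun i _ => ?_
      rw [Pi.add_apply, Int.cast_add, add_smul]⟩
  have hTneg : ∀ a ∈ T, -a ∈ T := by
    rw [hTeq]; rintro a ⟨ma, rfl⟩
    exact ⟨-ma, by
      rw [← Finset.sum_neg_distrib]
      refine Finset.sum_congr rfl fun i _ => ?_
      rw [Pi.neg_apply, Int.cast_neg, neg_smul]⟩
  have hTsub : ∀ a ∈ T, ∀ b ∈ T, a - b ∈ T := fun a ha b hb => by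
    rw [sub_eq_add_neg]; exact hTadd _ ha _ (hTneg _ hb)
  have hTc : T.Countable := by
    rw [hTeq]
    have h : {x : Fin n → ℝ | ∃ m : Fin n → ℤ, x = ∑ i, (m i : ℝ) • g i} =
        Set.range (fun m : Fin n → ℤ => ∑ i, (m i : ℝ) • g i) := by
      ext x; simp [Set.mem_range, eq_comm]
    rw [h]; exact Set.countable_range _
  haveI := hTc.to_subtype
  -- the two null "bad" sets
  set N₁ : Set (Fin n → ℝ) := univ \ ⋃ t : T, (· + (t : Fin n → ℝ)) '' K with hN₁def
  have hN₁ : volume N₁ = 0 := htile.2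
  have hN₁' : ∀ x : Fin n → ℝ, x ∉ N₁ → ∃ t ∈ T, x - t ∈ K := by
    intro x hx
    have hx' : x ∈ ⋃ t : T, (· + (t : Fin n → ℝ)) '' K := by
      by_contra h; exact hx ⟨trivial, h⟩
    rcases mem_iUnion.1 hx' with ⟨t, k, hk, hkt⟩
    exact ⟨t, t.2, by rw [← hkt]; simpa using hk⟩
  set N₂ : Set (Fin n → ℝ) := ⋃ (p : T × T) (_ : p.1 ≠ p.2),
    (((· + (p.1 : Fin n → ℝ)) '' K) ∩ ((· + (p.2 : Fin n → ℝ)) '' K)) with hN₂def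
  have hN₂ : volume N₂ = 0 :=
    measure_iUnion_null fun p => measure_iUnion_null fun hp => htile.1 p.1 p.2 hp
  have memN₂ : ∀ (y t₁ t₂ : Fin n → ℝ), t₁ ∈ T → t₂ ∈ T → t₁ ≠ t₂ →
      y - t₁ ∈ K → y - t₂ ∈ K → y ∈ N₂ := by
    intro y t₁ t₂ h₁ h₂ hne hy₁ hy₂
    refine mem_iUnion.2 ⟨(⟨t₁, h₁⟩, ⟨t₂, h₂⟩), mem_iUnion.2 ⟨?_, ?_, ?_⟩⟩
    · simpa [Subtype.ext_iff] using hne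
    · exact ⟨y - t₁, hy₁, by simp⟩
    · exact ⟨y - t₂, hy₂, by simp⟩
  -- Part 1
  have part1 : volume (K \ ⋃ i, Ki i) = 0 := by
    refine measure_mono_null ?_ (mulVec_preimage_null' B hdet hN₁)
    rintro x ⟨hxK, hx⟩
    by_contra hxN
    obtain ⟨t, htT, htK⟩ := hN₁' _ hxN
    obtain ⟨i, ⟨s, hsT, hts⟩, -⟩ := hrep t htT
    refine hx (mem_iUnion.2 ⟨i, ?_⟩)
    rw [hKi i]
    refine ⟨hxK, B.mulVec x - t, htK, s, hsT, ?_⟩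
    rw [hts, show B.mulVec x - (v i + B.mulVec s) = B.mulVec x - v i - B.mulVec s from by abel,
      Matrix.mulVec_sub, Matrix.mulVec_sub, hBinvB, hBinvB]
    abel
  -- Part 2
  have part2 : ∀ i j : Fin q, i ≠ j → volume (Ki i ∩ Ki j) = 0 := by
    intro i j hij
    refine measure_mono_null ?_ (mulVec_preimage_null' B hdet hN₂)
    rintro x ⟨hxi, hxj⟩
    rw [hKi i] at hxi; rw [hKi j] at hxj
    obtain ⟨-, k₁, hk₁, t₁, ht₁, he₁⟩ := hxi
    obtain ⟨-, k₂, hk₂, t₂, ht₂, he₂⟩ := hxj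
    have hBx₁ : B.mulVec x - (v i + B.mulVec t₁) ∈ K := by
      rw [he₁, Matrix.mulVec_add, Matrix.mulVec_add, hBBinv, hBBinv]
      simpa using hk₁
    have hBx₂ : B.mulVec x - (v j + B.mulVec t₂) ∈ K := by
      rw [he₂, Matrix.mulVec_add, Matrix.mulVec_add, hBBinv, hBBinv]
      simpa using hk₂
    have hu₁ : v i + B.mulVec t₁ ∈ T := hTadd _ (hv i) _ (hBT _ ht₁)
    have hu₂ : v j + B.mulVec t₂ ∈ T := hTadd _ (hv j) _ (hBT _ ht₂)
    have hne : v i + B.mulVec t₁ ≠ v j + B.mulVec t₂ := by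
      intro h
      obtain ⟨i', -, huniq⟩ := hrep _ hu₁
      exact hij ((huniq i ⟨t₁, ht₁, rfl⟩).trans (huniq j ⟨t₂, ht₂, h⟩).symm)
    exact memN₂ (B.mulVec x) _ _ hu₁ hu₂ hne hBx₁ hBx₂
  refine ⟨part1, part2, fun i => ?_⟩
  -- Part 3
  refine ⟨fun u => (B.mulVec '' Ki i) ∩ {x | x + (u : Fin n → ℝ) ∈ K},
    fun u => inter_subset_left, ?_, ?_, ?_, ?_, ?_⟩
  · -- pieces pairwise a.e. disjoint
    intro t₁ t₂ hne
    refine measure_mono_null ?_ hN₂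
    rintro x ⟨⟨-, hx₁⟩, -, hx₂⟩
    refine memN₂ x (-(t₁ : Fin n → ℝ)) (-(t₂ : Fin n → ℝ)) (hTneg _ t₁.2) (hTneg _ t₂.2)
      (fun h => hne (Subtype.ext (neg_inj.mp h))) ?_ ?_
    · simpa [sub_neg_eq_add] using hx₁
    · simpa [sub_neg_eq_add] using hx₂
  · -- pieces cover B '' Ki i
    have hcov : B.mulVec '' Ki i ⊆
        ⋃ u : T, ((B.mulVec '' Ki i) ∩ {x | x + (u : Fin n → ℝ) ∈ K}) := by
      rintro x ⟨a, ha, rfl⟩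
      have ha' := ha
      rw [hKi i] at ha'
      obtain ⟨haK, k, hk, t, ht, he⟩ := ha'
      have hu : -(v i + B.mulVec t) ∈ T := hTneg _ (hTadd _ (hv i) _ (hBT _ ht))
      refine mem_iUnion.2 ⟨⟨_, hu⟩, ⟨a, ha, rfl⟩, ?_⟩
      show B.mulVec a + -(v i + B.mulVec t) ∈ K
      have e : B.mulVec a + -(v i + B.mulVec t) = k := by
        rw [he, Matrix.mulVec_add, Matrix.mulVec_add, hBBinv, hBBinv]; abel
      rw [e]; exact hk
    exact measure_mono_null (fun x hx => (hx.2 (hcov hx.1)).elim) measure_empty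
  · -- translated pieces pairwise a.e. disjoint
    intro t₁ t₂ hne
    have hbad : volume ((N₂ ∪ ((· + (t₁ : Fin n → ℝ)) '' (B.mulVec '' N₂))) ∪
        ((· + (t₂ : Fin n → ℝ)) '' (B.mulVec '' N₂))) = 0 :=
      measure_union_null
        (measure_union_null hN₂ (add_image_null' _ (mulVec_image_null' B hN₂)))
        (add_image_null' _ (mulVec_image_null' B hN₂))
    refine measure_mono_null ?_ hbad
    rintro y ⟨⟨x₁, ⟨⟨a₁, ha₁, rfl⟩, -⟩, rfl⟩, ⟨x₂, ⟨⟨a₂, ha₂, rfl⟩, hx₂K⟩, hy₂⟩⟩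
    have ha₁' := ha₁; have ha₂' := ha₂
    rw [hKi i] at ha₁' ha₂'
    obtain ⟨haK₁, k₁, hk₁, s₁, hs₁, he₁⟩ := ha₁'
    obtain ⟨haK₂, k₂, hk₂, s₂, hs₂, he₂⟩ := ha₂'
    have hBa₁ : B.mulVec a₁ = k₁ + (v i + B.mulVec s₁) := by
      rw [he₁, Matrix.mulVec_add, Matrix.mulVec_add, hBBinv, hBBinv]; abel
    have hBa₂ : B.mulVec a₂ = k₂ + (v i + B.mulVec s₂) := by
      rw [he₂, Matrix.mulVec_add, Matrix.mulVec_add, hBBinv, hBBinv]; abel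
    have hu₁T : v i + B.mulVec s₁ + t₁ ∈ T :=
      hTadd _ (hTadd _ (hv i) _ (hBT _ hs₁)) _ t₁.2
    have hu₂T : v i + B.mulVec s₂ + t₂ ∈ T :=
      hTadd _ (hTadd _ (hv i) _ (hBT _ hs₂)) _ t₂.2
    have hy₂' : B.mulVec a₂ + (t₂ : Fin n → ℝ) = B.mulVec a₁ + (t₁ : Fin n → ℝ) := hy₂
    by_cases hcase : v i + B.mulVec s₁ + (t₁ : Fin n → ℝ) = v i + B.mulVec s₂ + (t₂ : Fin n → ℝ)
    · -- same tile: a₁ and a₂ differ by a nonzero lattice vector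
      left; right
      have hts : (t₁ : Fin n → ℝ) - (t₂ : Fin n → ℝ) = B.mulVec s₂ - B.mulVec s₁ := by
        rw [← sub_eq_zero,
          show (t₁ : Fin n → ℝ) - ↑t₂ - (B.mulVec s₂ - B.mulVec s₁) =
            (v i + B.mulVec s₁ + ↑t₁) - (v i + B.mulVec s₂ + ↑t₂) from by abel]
        exact sub_eq_zero_of_eq hcase
      have h1 : B.mulVec a₂ - B.mulVec a₁ = (t₁ : Fin n → ℝ) - (t₂ : Fin n → ℝ) := by
        rw [← sub_eq_zero,
          show B.mulVec a₂ - B.mulVec a₁ - ((t₁ : Fin n → ℝ) - ↑t₂) =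
            (B.mulVec a₂ + ↑t₂) - (B.mulVec a₁ + ↑t₁) from by abel]
        exact sub_eq_zero_of_eq hy₂'
      have hBdiff : B.mulVec (a₂ - a₁) = B.mulVec (s₂ - s₁) := by
        rw [Matrix.mulVec_sub, Matrix.mulVec_sub, h1, hts]
      have hdiff : a₂ - a₁ = s₂ - s₁ := by
        have h2 := congrArg B⁻¹.mulVec hBdiff
        rwa [hBinvB, hBinvB] at h2
      have hsne : s₂ - s₁ ≠ 0 := by
        intro h0
        apply hne
        apply Subtype.ext
        have h3 : (t₁ : Fin n → ℝ) - (t₂ : Fin n → ℝ) = 0 := by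
          rw [hts, ← Matrix.mulVec_sub, h0, Matrix.mulVec_zero]
        exact sub_eq_zero.mp h3
      have ha₁N : a₁ ∈ N₂ := by
        refine memN₂ a₁ 0 (s₁ - s₂) hT0 (hTsub _ hs₁ _ hs₂)
          (fun h => hsne (sub_eq_zero.mpr (sub_eq_zero.mp h.symm).symm))
          (by rw [sub_zero]; exact haK₁) ?_
        have e : a₁ - (s₁ - s₂) = a₂ := by
          have h4 : a₂ = a₁ + (s₂ - s₁) := by rw [← hdiff]; abel
          rw [h4]; abel
        rw [e]; exact haK₂
      exact ⟨B.mulVec a₁, ⟨a₁, ha₁N, rfl⟩, rfl⟩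
    · -- distinct tiles
      left; left
      have hy₁ : (B.mulVec a₁ + (t₁ : Fin n → ℝ)) - (v i + B.mulVec s₁ + ↑t₁) ∈ K := by
        have e : (B.mulVec a₁ + (t₁ : Fin n → ℝ)) - (v i + B.mulVec s₁ + ↑t₁) = k₁ := by
          rw [hBa₁]; abel
        rw [e]; exact hk₁
      have hy₂'' : (B.mulVec a₁ + (t₁ : Fin n → ℝ)) - (v i + B.mulVec s₂ + ↑t₂) ∈ K := by
        have e : (B.mulVec a₁ + (t₁ : Fin n → ℝ)) - (v i + B.mulVec s₂ + ↑t₂) = k₂ := by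
          rw [← hy₂', hBa₂]; abel
        rw [e]; exact hk₂
      exact memN₂ _ _ _ hu₁T hu₂T hcase hy₁ hy₂''
  · -- translated pieces cover K
    refine measure_mono_null ?_
      (mulVec_preimage_null' B⁻¹ hdet'
        (by rw [measure_preimage_add_right]; exact hN₁ :
          volume ((· + B⁻¹.mulVec (v i)) ⁻¹' N₁) = 0))
    rintro y ⟨hyK, hy⟩
    show B⁻¹.mulVec y + B⁻¹.mulVec (v i) ∈ N₁
    by_contra hw
    obtain ⟨t, htT, htK⟩ := hN₁' _ hw
    refine hy (mem_iUnion.2 ⟨⟨B.mulVec t - v i, hTsub _ (hBT _ htT) _ (hv i)⟩, ?_⟩)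
    refine ⟨y - (B.mulVec t - v i),
      ⟨⟨B⁻¹.mulVec y + B⁻¹.mulVec (v i) - t, ?_, ?_⟩, ?_⟩, by simp⟩
    · rw [hKi i]
      exact ⟨htK, y, hyK, -t, hTneg _ htT, by abel⟩
    · rw [Matrix.mulVec_sub, Matrix.mulVec_add, hBBinv, hBBinv]; abel
    · show y - (B.mulVec t - v i) + (B.mulVec t - v i) ∈ K
      simpa using hyK
  · -- translated pieces inside K
    refine measure_mono_null (fun y hy => ?_) (measure_empty (α := Fin n → ℝ))
    obtain ⟨hy₁, hy₂⟩ := hy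
    rcases mem_iUnion.1 hy₁ with ⟨u, x, ⟨-, hxK⟩, rfl⟩
    exact hy₂ hxK
end

section
/- With notation as in the previous setting (K a T-tile, B⁻¹K ⊆ K, q = |det B|, K_i = (B⁻¹K + B⁻¹v_i + T) ∩ K), each K_i has measure |K_i| = |K|/q. -/
/-! With `S = B⁻¹(K + vᵢ)`, the piece `Kᵢ` is the part of the tile `K` covered by the
`T`-translates of `S`. These translates are essentially disjoint, being images under `B⁻¹` of
translates of `K` by `vᵢ + BT ⊆ vᵢ + T`. Cutting them by `K` and moving each piece `(S + t) ∩ K`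
back by `-t` gives the pieces `S ∩ (K - t)`, which reassemble `S` because `K` tiles by `T`.
Hence `|Kᵢ| = |S| = |det B|⁻¹ |K|`. -/

open MeasureTheory Set

variable {n : ℕ}

def IsTransPacking {G : Type*} [Add G] [MeasurableSpace G] (μ : Measure G) (T S : Set G) : Prop :=
  ∀ t₁ t₂ : T, t₁ ≠ t₂ → μ (((· + (t₁ : G)) '' S) ∩ ((· + (t₂ : G)) '' S)) = 0

section Translates

variable {G : Type*} [MeasurableSpace G] {μ : Measure G}

lemma measure_image_add_right [AddGroup G] [MeasurableAdd G] [μ.IsAddRightInvariant]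
    (a : G) (s : Set G) : μ ((· + a) '' s) = μ s := by
  rw [image_add_right, measure_preimage_add_right]

lemma MeasurableSet.image_add_right [AddGroup G] [MeasurableAdd G] {s : Set G}
    (hs : MeasurableSet s) (a : G) : MeasurableSet ((· + a) '' s) := by
  rw [Set.image_add_right]
  exact measurable_add_const _ hs

lemma IsTransPacking.image_add_right [AddCommGroup G] [MeasurableAdd G]
    [μ.IsAddRightInvariant] {T S : Set G} (h : IsTransPacking μ T S) (a : G) :
    IsTransPacking μ T ((· + a) '' S) := by
  intro t₁ t₂ hne
  have hcomm : ∀ t : G, (· + t) '' ((· + a) '' S) = (· + a) '' ((· + t) '' S) := fun t => by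
    simp only [image_image, add_right_comm]
  rw [hcomm, hcomm, ← image_inter (add_left_injective a), measure_image_add_right]
  exact h t₁ t₂ hne

theorem measure_iUnion_image_add_inter_of_tile [AddGroup G] [MeasurableAdd G]
    [μ.IsAddRightInvariant] {T S K : Set G} (hTc : T.Countable) (hneg : ∀ t ∈ T, -t ∈ T)
    (hS : MeasurableSet S) (hK : MeasurableSet K) (hSp : IsTransPacking μ T S)
    (hKp : IsTransPacking μ T K) (hcover : μ (univ \ ⋃ t : T, (· + (t : G)) '' K) = 0) :
    μ ((⋃ t : T, (· + (t : G)) '' S) ∩ K) = μ S := by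
  have := hTc.to_subtype
  let negT : T ≃ T := (Equiv.neg G).subtypeEquiv fun t =>
    ⟨hneg t, fun h => by simpa using hneg _ h⟩
  have hshift : ∀ t : G, μ ((· + t) '' S ∩ K) = μ (S ∩ (· + -t) '' K) := fun t => by
    rw [← measure_preimage_add_right μ t, preimage_inter, Set.image_add_right (b := -t), neg_neg,
      preimage_image_eq _ (add_left_injective t)]
  calc μ ((⋃ t : T, (· + (t : G)) '' S) ∩ K)
      = ∑' t : T, μ ((· + (t : G)) '' S ∩ K) := by
        rw [iUnion_inter]
        refine measure_iUnion₀ (fun t₁ t₂ hne => ?_)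
          (fun t => ((hS.image_add_right _).inter hK).nullMeasurableSet)
        exact measure_mono_null (inter_subset_inter inter_subset_left inter_subset_left)
          (hSp t₁ t₂ hne)
    _ = ∑' t : T, μ (S ∩ (· + (negT t : G)) '' K) := by
        simp only [hshift]; rfl
    _ = ∑' t : T, μ (S ∩ (· + (t : G)) '' K) :=
        negT.tsum_eq fun t : T => μ (S ∩ (· + (t : G)) '' K)
    _ = μ (S ∩ ⋃ t : T, (· + (t : G)) '' K) := by
        rw [inter_iUnion]
        refine (measure_iUnion₀ (fun t₁ t₂ hne => ?_)
          (fun t => (hS.inter (hK.image_add_right _)).nullMeasurableSet)).symm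
        exact measure_mono_null (inter_subset_inter inter_subset_right inter_subset_right)
          (hKp t₁ t₂ hne)
    _ = μ S := measure_inter_conull (by rwa [compl_eq_univ_sdiff])

end Translates

namespace IsFullRankLattice

variable {T : Set (Fin n → ℝ)}

lemma countable (hT : IsFullRankLattice T) : T.Countable := by
  obtain ⟨g, -, -, rfl⟩ := hT
  convert countable_range fun m : Fin n → ℤ => ∑ i, (m i : ℝ) • g i using 1
  ext x
  simp [eq_comm]

lemma neg_mem (hT : IsFullRankLattice T) {t : Fin n → ℝ} (ht : t ∈ T) : -t ∈ T := by
  obtain ⟨g, -, -, rfl⟩ := hT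
  obtain ⟨m, rfl⟩ := ht
  exact ⟨-m, by simp [Finset.sum_neg_distrib]⟩

end IsFullRankLattice

section Matrix

variable {B : Matrix (Fin n) (Fin n) ℝ}

lemma Matrix.mulVec_injective_of_isUnit_det (hB : IsUnit B.det) : Function.Injective B.mulVec :=
  mulVec_injective_of_isUnit ((isUnit_iff_isUnit_det B).2 hB)

lemma volume_image_mulVec (s : Set (Fin n → ℝ)) :
    volume (B.mulVec '' s) = ENNReal.ofReal |B.det| * volume s := by
  have h := Measure.addHaar_image_linearMap volume (Matrix.toLin' B) s
  rwa [LinearMap.det_toLin', Matrix.toLin'_apply', Matrix.coe_mulVecLin] at h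

lemma volume_image_inv_mulVec (s : Set (Fin n → ℝ)) :
    volume (B⁻¹.mulVec '' s) = ENNReal.ofReal |B.det|⁻¹ * volume s := by
  rw [volume_image_mulVec, Matrix.det_nonsing_inv, Ring.inverse_eq_inv', abs_inv]

lemma MeasurableSet.image_mulVec_of_isUnit (hB : IsUnit B.det) {s : Set (Fin n → ℝ)}
    (hs : MeasurableSet s) : MeasurableSet (B.mulVec '' s) :=
  hs.image_of_continuousOn_injOn (Matrix.toLin' B).continuous_of_finiteDimensional.continuousOn
    (Matrix.mulVec_injective_of_isUnit_det hB).injOn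

lemma IsTransPacking.image_inv_mulVec (hB : IsUnit B.det) {T T' K : Set (Fin n → ℝ)}
    (hBT : ∀ t ∈ T', B.mulVec t ∈ T) (h : IsTransPacking volume T K) :
    IsTransPacking volume T' (B⁻¹.mulVec '' K) := by
  intro t₁ t₂ hne
  have hshift : ∀ t : Fin n → ℝ,
      (· + t) '' (B⁻¹.mulVec '' K) = B⁻¹.mulVec '' ((· + B.mulVec t) '' K) := fun t => by
    simp only [image_image, Matrix.mulVec_add, Matrix.mulVec_mulVec,
      Matrix.nonsing_inv_mul B hB, Matrix.one_mulVec]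
  have hBinv_inj := Matrix.mulVec_injective_of_isUnit_det (Matrix.isUnit_nonsing_inv_det B hB)
  rw [hshift, hshift, ← image_inter hBinv_inj, volume_image_inv_mulVec]
  refine mul_eq_zero_of_right _ (h ⟨_, hBT _ t₁.2⟩ ⟨_, hBT _ t₂.2⟩ fun heq => hne ?_)
  exact Subtype.ext (Matrix.mulVec_injective_of_isUnit_det hB (congrArg Subtype.val heq))

end Matrix

theorem tile_piece_measure_general
    (T : Set (Fin n → ℝ)) (hT : IsFullRankLattice T)
    (B : Matrix (Fin n) (Fin n) ℝ) (hB : IsUnit B.det)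
    (hBT : ∀ t ∈ T, B.mulVec t ∈ T)
    (q : ℕ) (hq : (q : ℝ) = |B.det|)
    (v : Fin q → (Fin n → ℝ))
    (K : Set (Fin n → ℝ)) (hK : MeasurableSet K) (htile : IsTransTile T K)
    (Ki : Fin q → Set (Fin n → ℝ))
    (hKi : ∀ i, Ki i =
      {x ∈ K | ∃ k ∈ K, ∃ t ∈ T, x = B⁻¹.mulVec k + B⁻¹.mulVec (v i) + t}) :
    ∀ i : Fin q, volume (Ki i) = volume K / q := by
  intro i
  set S := B⁻¹.mulVec '' ((· + v i) '' K)
  have hKi_eq : Ki i = (⋃ t : T, (· + (t : Fin n → ℝ)) '' S) ∩ K := by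
    ext x
    simp only [hKi, S, image_image, Matrix.mulVec_add, mem_sep_iff, mem_inter_iff, mem_iUnion,
      mem_image, Subtype.exists, exists_prop]
    grind
  have hS : MeasurableSet S :=
    (hK.image_add_right _).image_mulVec_of_isUnit (Matrix.isUnit_nonsing_inv_det B hB)
  have hKp : IsTransPacking volume T K := htile.1
  have hSp : IsTransPacking volume T S := (hKp.image_add_right (v i)).image_inv_mulVec hB hBT
  have hq_pos : (0 : ℝ) < q := hq ▸ abs_pos.2 hB.ne_zero
  rw [hKi_eq, measure_iUnion_image_add_inter_of_tile hT.countable (fun _ => hT.neg_mem) hS hK hSp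
    hKp htile.2, volume_image_inv_mulVec, measure_image_add_right, ← hq,
    ENNReal.ofReal_inv_of_pos hq_pos, ENNReal.ofReal_natCast, ENNReal.div_eq_inv_mul]

/-- In the setting of the decomposition lemma (`K` a `T`-tile, `B⁻¹K ⊆ K`,
`q = |det B|`, `K_i = (B⁻¹K + B⁻¹v_i + T) ∩ K`), each `K_i` has measure `|K|/q`. -/
theorem tile_piece_measure
    (T : Set (Fin n → ℝ)) (hT : IsFullRankLattice T)
    (B : Matrix (Fin n) (Fin n) ℝ) (hB : IsUnit B.det)
    (hBT : ∀ t ∈ T, B.mulVec t ∈ T)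
    (q : ℕ) (hq : (q : ℝ) = |B.det|)
    (v : Fin q → (Fin n → ℝ)) (hv : ∀ i, v i ∈ T)
    (hrep : ∀ t ∈ T, ∃! i : Fin q, ∃ s ∈ T, t = v i + B.mulVec s)
    (K : Set (Fin n → ℝ)) (hK : MeasurableSet K) (htile : IsTransTile T K)
    (hBK : B⁻¹.mulVec '' K ⊆ K)
    (Ki : Fin q → Set (Fin n → ℝ))
    (hKi : ∀ i, Ki i =
      {x ∈ K | ∃ k ∈ K, ∃ t ∈ T, x = B⁻¹.mulVec k + B⁻¹.mulVec (v i) + t}) :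
    ∀ i : Fin q, volume (Ki i) = volume K / q :=
  tile_piece_measure_general T hT B hB hBT q hq v K hK htile Ki hKi
end
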